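/- arXiv:2510.11069 — 3 statements merged into one kernel-verified Lean document; each statement's English description precedes it below -/
import Mathlib

section
/- Let L be a finitely generated free module over the p-adic integers Z_p and let f : L → L be a Z_p-linear map. If the rank of Ker(f) is r and A is the torsion submodule of Coker(f), then the kernel of the induced map f ⊗ 1 : L/p^n L → L/p^n L has cardinality p^{n r} · |A / p^n A|. -/
/-!
Reduction modulo `pⁿ` is right exact, so the cokernel of `f ⊗ 1` is `Coker f / pⁿ`; and for an
endomorphism of the finite module `L/pⁿL` kernel and cokernel have the same size. Over the PID
`ℤ_[p]` the finitely generated module `Coker f` splits as `A × F` with `F` free, of rank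
`rank (Coker f) = rank (Ker f) = r` by rank–nullity, so `|F/pⁿF| = p^(n r)`.
-/

open Pointwise

universe u

namespace LinearMap

variable {R : Type*} [Ring R] {M : Type u} [AddCommGroup M] [Module R M]

theorem natCard_ker_eq_natCard_quotient_range [Finite M] (g : M →ₗ[R] M) :
    Nat.card (ker g) = Nat.card (M ⧸ range g) := by
  have hker := (ker g).card_eq_card_quotient_mul_card
  have hrange := (range g).card_eq_card_quotient_mul_card
  rw [Nat.card_congr g.quotKerEquivRange.toEquiv, hrange, mul_comm] at hker
  exact (Nat.eq_of_mul_eq_mul_right Nat.card_pos hker).symm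

theorem finrank_quotient_range_eq_finrank_ker [HasRankNullity.{u} R] [StrongRankCondition R]
    [Module.Finite R M] (f : M →ₗ[R] M) :
    Module.finrank R (M ⧸ range f) = Module.finrank R (ker f) := by
  have hker := (ker f).finrank_quotient_add_finrank
  have hrange := (range f).finrank_quotient_add_finrank
  rw [f.quotKerEquivRange.finrank_eq] at hker
  omega

end LinearMap

namespace QuotSMulTop

open TensorProduct

variable {R : Type*} [CommRing R] (r : R) {M N : Type*} [AddCommGroup M] [Module R M]
  [AddCommGroup N] [Module R N]

noncomputable def quotientRangeMapEquiv (f : M →ₗ[R] N) :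
    (QuotSMulTop r N ⧸ LinearMap.range (map r f)) ≃ₗ[R] QuotSMulTop r (N ⧸ LinearMap.range f) :=
  have exact := map_exact r f.exact_map_mkQ_range (Submodule.mkQ_surjective _)
  Submodule.quotEquivOfEq _ _ exact.linearMap_ker_eq.symm ≪≫ₗ
    (map r (LinearMap.range f).mkQ).quotKerEquivOfSurjective
      (map_surjective r (Submodule.mkQ_surjective _))

variable (M N) in
noncomputable def prodEquiv : QuotSMulTop r (M × N) ≃ₗ[R] QuotSMulTop r M × QuotSMulTop r N :=
  equivQuotTensor r (M × N) ≪≫ₗ prodRight R R _ M N ≪≫ₗ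
    (equivQuotTensor r M).symm.prodCongr (equivQuotTensor r N).symm

variable (M) in
theorem natCard_eq_pow_finrank [Module.Free R M] [Module.Finite R M] [StrongRankCondition R] :
    Nat.card (QuotSMulTop r M) = Nat.card (R ⧸ Ideal.span {r}) ^ Module.finrank R M := by
  classical
  let b := Module.finBasis R M
  let e : QuotSMulTop r M ≃ₗ[R] (Fin (Module.finrank R M) → R ⧸ Ideal.span {r}) :=
    equivQuotTensor r M ≪≫ₗ b.equivFun.lTensor _ ≪≫ₗ piScalarRight R R _ _
  rw [Nat.card_congr e.toEquiv, Nat.card_fun, Nat.card_fin]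

end QuotSMulTop

noncomputable def Submodule.equivProdOfProjectiveQuotient {R M : Type*} [Ring R] [AddCommGroup M]
    [Module R M] (N : Submodule R M) [Module.Projective R (M ⧸ N)] : M ≃ₗ[R] N × (M ⧸ N) :=
  ((LinearMap.exact_subtype_mkQ N).splitSurjectiveEquiv N.injective_subtype
    ⟨_, (Module.projective_lifting_property N.mkQ .id N.mkQ_surjective).choose_spec⟩).1

theorem PadicInt.natCard_quotient_span_pow (p : ℕ) [Fact p.Prime] (n : ℕ) :
    Nat.card (ℤ_[p] ⧸ Ideal.span {(p : ℤ_[p]) ^ n}) = p ^ n := by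
  rw [← ker_toZModPow, Nat.card_congr
    (RingHom.quotientKerEquivOfSurjective (ZMod.ringHom_surjective (toZModPow n))).toEquiv,
    Nat.card_zmod]

theorem PadicInt.natCard_quotSMulTop_pow (p : ℕ) [Fact p.Prime] (n : ℕ) (M : Type*)
    [AddCommGroup M] [Module ℤ_[p] M] [Module.Free ℤ_[p] M] [Module.Finite ℤ_[p] M] :
    Nat.card (QuotSMulTop ((p : ℤ_[p]) ^ n) M) = p ^ (n * Module.finrank ℤ_[p] M) := by
  rw [QuotSMulTop.natCard_eq_pow_finrank, natCard_quotient_span_pow, pow_mul]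

/-- Let `L` be a finitely generated free module over the `p`-adic integers
and `f : L → L` a linear map. If the rank of `Ker f` is `r` and `A` is the torsion
submodule of `Coker f`, then the kernel of the induced map `f ⊗ 1 : L/pⁿL → L/pⁿL`
has cardinality `p^(n·r) · |A/pⁿA|`. -/
theorem stmt3 (p : ℕ) [Fact p.Prime] (L : Type*) [AddCommGroup L] [Module ℤ_[p] L]
    [Module.Free ℤ_[p] L] [Module.Finite ℤ_[p] L] (f : L →ₗ[ℤ_[p]] L) (n : ℕ)
    (r : ℕ) (hr : Module.finrank ℤ_[p] (LinearMap.ker f) = r) :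
    Nat.card (LinearMap.ker (Submodule.mapQ
        ((p : ℤ_[p]) ^ n • (⊤ : Submodule ℤ_[p] L))
        ((p : ℤ_[p]) ^ n • (⊤ : Submodule ℤ_[p] L)) f (by
          intro x hx
          rw [Submodule.mem_comap]
          obtain ⟨y, -, rfl⟩ := Submodule.mem_map.mp hx
          exact Submodule.mem_map.mpr ⟨f y, trivial, (map_smul f _ y).symm⟩))) =
      p ^ (n * r) *
        Nat.card ((Submodule.torsion ℤ_[p] (L ⧸ LinearMap.range f)) ⧸
          ((p : ℤ_[p]) ^ n •
            (⊤ : Submodule ℤ_[p] (Submodule.torsion ℤ_[p] (L ⧸ LinearMap.range f))))) := by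
  set T := Submodule.torsion ℤ_[p] (L ⧸ LinearMap.range f)
  have hrank : Module.finrank ℤ_[p] ((L ⧸ LinearMap.range f) ⧸ T) = r := by
    rw [finrank_quotient_eq_of_le_torsion le_rfl, f.finrank_quotient_range_eq_finrank_ker, hr]
  have : Finite (QuotSMulTop ((p : ℤ_[p]) ^ n) L) := Nat.finite_of_card_ne_zero <| by
    rw [PadicInt.natCard_quotSMulTop_pow]
    exact pow_ne_zero _ (Fact.out : p.Prime).ne_zero
  change Nat.card (LinearMap.ker (QuotSMulTop.map _ f)) = _
  rw [LinearMap.natCard_ker_eq_natCard_quotient_range,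
    Nat.card_congr (QuotSMulTop.quotientRangeMapEquiv _ f).toEquiv,
    Nat.card_congr ((QuotSMulTop.congr _ T.equivProdOfProjectiveQuotient).trans
      (QuotSMulTop.prodEquiv _ _ _)).toEquiv,
    Nat.card_prod, PadicInt.natCard_quotSMulTop_pow p n (_ ⧸ T), hrank, mul_comm]
end

section
/- Let L be a finite free Z_p-module, f : L → L linear with kernel of rank r, and A the torsion of Coker(f). If the number of nonzero elementary divisors of the mod p^{k+1} reduction of f equals rank(L) - r, then the exponent of A divides p^k. -/
/-!
Over the PID `ℤ_[p]` the image of `M` has the form `B · ⊕ⱼ (aⱼ)` with `B` invertible and exactly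
`l - r` nonzero `aⱼ`, and the torsion of the cokernel is `⊕ ℤ_[p] ⧸ (aⱼ)` over the nonzero `aⱼ`.
Reducing mod `p^(k+1)`, the image of the reduction is `B̄ · ⊕ⱼ (āⱼ)`, so `P · B̄` carries
`⊕ⱼ (āⱼ)` onto `⊕ⱼ (dⱼ)`. In `ℤ/p^(k+1)` every nonzero ideal contains `p^k`, so
`⊕ⱼ (cⱼ) ∩ (p^k)^l` has `p^m` elements, `m` the number of nonzero `cⱼ`; as automorphisms of
`(ℤ/p^(k+1))^l` preserve `(p^k)^l`, this `m` is the same for `(āⱼ)` and `(dⱼ)`. Hence no nonzero `aⱼ`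
vanishes mod `p^(k+1)`, i.e. every nonzero `aⱼ` divides `p^k`, and `p^k` kills the torsion.
-/

open Submodule

section Pi

variable {R : Type*} [CommRing R] {ι : Type*}

theorem Submodule.pi_univ_inf_pi_univ {φ : ι → Type*} [∀ i, AddCommMonoid (φ i)]
    [∀ i, Module R (φ i)] (p q : ∀ i, Submodule R (φ i)) :
    pi Set.univ p ⊓ pi Set.univ q = pi Set.univ fun i => p i ⊓ q i := by
  ext x
  simp [forall_and]

theorem Submodule.natCard_pi_univ [Fintype ι] {φ : ι → Type*} [∀ i, AddCommMonoid (φ i)]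
    [∀ i, Module R (φ i)] (p : ∀ i, Submodule R (φ i)) :
    Nat.card (pi Set.univ p) = ∏ i, Nat.card (p i) := by
  rw [← Nat.card_pi]
  exact Nat.card_congr (Equiv.Set.univPi fun i => (p i : Set (φ i)))

theorem Matrix.range_mulVecLin_diagonal [Fintype ι] [DecidableEq ι] (c : ι → R) :
    LinearMap.range (Matrix.diagonal c).mulVecLin = pi Set.univ fun j => Ideal.span {c j} := by
  ext x
  simp only [LinearMap.mem_range, Matrix.mulVecLin_apply, Matrix.mulVec_diagonal,
    Submodule.mem_pi, Set.mem_univ, true_implies, Ideal.mem_span_singleton, dvd_def, funext_iff,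
    eq_comm (b := x _)]
  exact (Classical.skolem (p := fun i y => x i = c i * y)).symm

theorem Submodule.pi_univ_span_singleton_eq_range (r : R) :
    pi Set.univ (fun _ : ι => Ideal.span {r}) = LinearMap.range (r • LinearMap.id) := by
  ext x
  simp only [Submodule.mem_pi, Set.mem_univ, true_implies, Ideal.mem_span_singleton, dvd_def,
    LinearMap.mem_range, LinearMap.smul_apply, LinearMap.id_coe, id_eq, funext_iff,
    Pi.smul_apply, smul_eq_mul, eq_comm (a := r * _)]
  exact Classical.skolem (p := fun i y => x i = r * y)

theorem Submodule.map_pi_univ_span_singleton {f : (ι → R) →ₗ[R] ι → R}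
    (hf : Function.Surjective f) (r : R) :
    map f (pi Set.univ fun _ => Ideal.span {r}) = pi Set.univ fun _ => Ideal.span {r} := by
  rw [pi_univ_span_singleton_eq_range, ← LinearMap.range_comp, LinearMap.comp_smul,
    LinearMap.comp_id, ← LinearMap.id_comp f, ← LinearMap.smul_comp, LinearMap.range_comp,
    LinearMap.range_eq_top.2 hf, map_top]

end Pi

section MinimalIdeal

variable {R : Type*} [CommRing R] [DecidableEq R] {t : R} {ι : Type*} [Fintype ι]

theorem natCard_pi_span_inf_pi_span_of_dvd (hdvd : ∀ c : R, c ≠ 0 → c ∣ t) (c : ι → R) :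
    Nat.card ↥(pi Set.univ (fun j => Ideal.span {c j}) ⊓ pi Set.univ fun _ => Ideal.span {t}) =
      Nat.card (Ideal.span {t}) ^ (Finset.univ.filter fun j => c j ≠ 0).card := by
  have hcard (j : ι) : Nat.card ↥(Ideal.span {c j} ⊓ Ideal.span {t}) =
      if c j ≠ 0 then Nat.card (Ideal.span {t}) else 1 := by
    by_cases hc : c j = 0
    · simp [hc]
    · rw [if_pos hc, inf_eq_right.2 (Ideal.span_singleton_le_span_singleton.2 (hdvd _ hc))]
  rw [pi_univ_inf_pi_univ, natCard_pi_univ, Finset.prod_congr rfl fun j _ => hcard j,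
    ← Finset.prod_filter, Finset.prod_const]

theorem card_filter_ne_zero_eq_of_map_pi_span_eq [Finite R] (ht : t ≠ 0)
    (hdvd : ∀ c : R, c ≠ 0 → c ∣ t) {f : (ι → R) →ₗ[R] ι → R} (hf : Function.Bijective f)
    {c e : ι → R}
    (h : map f (pi Set.univ fun j => Ideal.span {c j}) = pi Set.univ fun j => Ideal.span {e j}) :
    (Finset.univ.filter fun j => c j ≠ 0).card = (Finset.univ.filter fun j => e j ≠ 0).card := by
  have hcard := Nat.card_congr (equivMapOfInjective f hf.1
    (pi Set.univ (fun j => Ideal.span {c j}) ⊓ pi Set.univ fun _ => Ideal.span {t})).toEquiv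
  rw [map_inf _ hf.1, h, map_pi_univ_span_singleton hf.2] at hcard
  have htwo : 2 ≤ Nat.card (Ideal.span {t}) := by
    have : Nontrivial (Ideal.span {t}) :=
      ⟨⟨0, ⟨t, Ideal.mem_span_singleton_self t⟩, fun h => ht (congrArg Subtype.val h).symm⟩⟩
    exact Finite.one_lt_card_iff_nontrivial.2 this
  rw [natCard_pi_span_inf_pi_span_of_dvd hdvd, natCard_pi_span_inf_pi_span_of_dvd hdvd] at hcard
  exact Nat.pow_right_injective htwo hcard

end MinimalIdeal

theorem LinearMap.finrank_range_add_finrank_ker_of_isNoetherianRing {R : Type*} [CommRing R]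
    [IsDomain R] [IsNoetherianRing R] {ι : Type*} [Fintype ι] (f : (ι → R) →ₗ[R] ι → R) :
    Module.finrank R (LinearMap.range f) + Module.finrank R (LinearMap.ker f) = Fintype.card ι := by
  have h := f.rank_range_add_rank_ker
  rw [← Module.finrank_eq_rank, ← Module.finrank_eq_rank, ← Module.finrank_eq_rank,
    Module.finrank_fintype_fun_eq_card] at h
  exact_mod_cast h

theorem Matrix.coe_range_mulVecLin_map {R S : Type*} [CommRing R] [CommRing S] {m n : Type*}
    [Fintype n] {φ : R →+* S} (hφ : Function.Surjective φ) (A : Matrix m n R) :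
    (LinearMap.range (A.map φ).mulVecLin : Set (m → S)) =
      (φ ∘ ·) '' LinearMap.range A.mulVecLin := by
  ext x
  simp only [SetLike.mem_coe, LinearMap.mem_range, Matrix.mulVecLin_apply, Set.mem_image,
    exists_exists_eq_and]
  constructor
  · rintro ⟨w, rfl⟩
    obtain ⟨v, rfl⟩ := hφ.comp_left w
    exact ⟨v, funext (RingHom.map_mulVec φ A v)⟩
  · rintro ⟨v, rfl⟩
    exact ⟨φ ∘ v, by ext i; exact (RingHom.map_mulVec φ A v i).symm⟩

theorem Matrix.range_mulVecLin_map_eq_of_range_eq {R S : Type*} [CommRing R] [CommRing S]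
    {m n n' : Type*} [Fintype n] [Fintype n'] {φ : R →+* S} (hφ : Function.Surjective φ)
    {A : Matrix m n R} {B : Matrix m n' R}
    (h : LinearMap.range A.mulVecLin = LinearMap.range B.mulVecLin) :
    LinearMap.range (A.map φ).mulVecLin = LinearMap.range (B.map φ).mulVecLin :=
  SetLike.coe_injective <| by rw [coe_range_mulVecLin_map hφ, coe_range_mulVecLin_map hφ, h]

namespace PadicInt

variable {p : ℕ} [Fact p.Prime] {k : ℕ}

theorem dvd_pow_of_toZModPow_ne_zero {a : ℤ_[p]} (h : toZModPow (k + 1) a ≠ 0) :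
    a ∣ (p : ℤ_[p]) ^ k := by
  have ha : a ≠ 0 := by rintro rfl; exact h (map_zero _)
  obtain ⟨n, hn⟩ := IsDiscreteValuationRing.associated_pow_irreducible ha irreducible_p
  have hnk : n ≤ k := by
    by_contra! hkn
    refine h ((RingHom.mem_ker).1 ?_)
    rw [ker_toZModPow, Ideal.mem_span_singleton]
    exact (pow_dvd_pow _ hkn).trans hn.symm.dvd
  exact hn.dvd.trans (pow_dvd_pow _ hnk)

end PadicInt

namespace ZMod

variable {p : ℕ} [Fact p.Prime] {k : ℕ}

theorem dvd_prime_pow_of_ne_zero {x : ZMod (p ^ (k + 1))} (hx : x ≠ 0) : x ∣ (p : ZMod _) ^ k := by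
  obtain ⟨a, rfl⟩ := ZMod.ringHom_surjective (PadicInt.toZModPow (p := p) (k + 1)) x
  simpa using map_dvd (PadicInt.toZModPow (k + 1)) (PadicInt.dvd_pow_of_toZModPow_ne_zero hx)

end ZMod

theorem ZMod.natCast_pow_ne_zero_of_one_lt {p : ℕ} (hp : 1 < p) (k : ℕ) :
    (p : ZMod (p ^ (k + 1))) ^ k ≠ 0 := by
  rw [← Nat.cast_pow, Ne, ZMod.natCast_eq_zero_iff, Nat.pow_dvd_pow_iff_le_right hp]
  omega

section PID

variable {R : Type*} [CommRing R] [IsDomain R] [IsPrincipalIdealRing R] [DecidableEq R]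
  {ι : Type*} [Fintype ι] [DecidableEq ι]

theorem Submodule.exists_isUnit_eq_range_mul_diagonal (N : Submodule R (ι → R)) :
    ∃ (B : Matrix ι ι R) (a : ι → R), IsUnit B ∧
      N = LinearMap.range (B * Matrix.diagonal a).mulVecLin ∧
      (Finset.univ.filter fun j => a j ≠ 0).card = Module.finrank R N := by
  obtain ⟨n, bM, bN, f, a, snf⟩ := N.smithNormalForm (Pi.basisFun R ι)
  have ha (i : Fin n) : a i ≠ 0 := fun h => bN.ne_zero i (Subtype.ext (by simp [snf, h]))
  set a' : ι → R := Function.extend f a 0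
  have ha' (i : Fin n) : a' (f i) = a i := f.injective.extend_apply a 0 i
  have ha'_of_notMem {j : ι} (hj : ¬∃ i, f i = j) : a' j = 0 := Function.extend_apply' _ _ _ hj
  refine ⟨(Pi.basisFun R ι).toMatrix bM, a',
    @isUnit_of_invertible _ _ _ ((Pi.basisFun R ι).invertibleToMatrix bM), ?_, ?_⟩
  · have hN : N = span R (Set.range fun i => a i • bM (f i)) := by
      calc N = map N.subtype (span R (Set.range bN)) := by rw [bN.span_eq, map_subtype_top]
        _ = _ := by rw [map_span, ← Set.range_comp]; simp [Function.comp_def, snf]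
    have hcol : ((Pi.basisFun R ι).toMatrix bM * Matrix.diagonal a').col =
        fun j => a' j • bM j := by
      ext x j
      simp [Module.Basis.toMatrix_apply, mul_comm]
    rw [Matrix.range_mulVecLin, hcol, hN]
    apply le_antisymm
    · exact span_mono fun _ ⟨i, hi⟩ => ⟨f i, by simpa only [ha'] using hi⟩
    · refine span_le.2 ?_
      rintro _ ⟨j, rfl⟩
      by_cases hj : ∃ i, f i = j
      · obtain ⟨i, rfl⟩ := hj
        exact subset_span ⟨i, by simp only [ha']⟩
      · simp [ha'_of_notMem hj]
  · have himage : (Finset.univ.filter fun j => a' j ≠ 0) = Finset.univ.map f := by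
      ext j
      by_cases hj : ∃ i, f i = j
      · obtain ⟨i, rfl⟩ := hj
        simp [ha', ha i]
      · simp_all [ha'_of_notMem hj]
    rw [himage, Finset.card_map, Finset.card_univ, Fintype.card_fin,
      Module.finrank_eq_card_basis bN, Fintype.card_fin]

end PID

theorem smul_eq_zero_of_mem_torsion_quotient_range_mul_diagonal {R : Type*} [CommRing R]
    [IsDomain R] {ι : Type*} [Fintype ι] [DecidableEq ι] {B : Matrix ι ι R} (hB : IsUnit B)
    {a : ι → R} {s : R} (ha : ∀ j, a j ≠ 0 → a j ∣ s) :
    ∀ x ∈ torsion R ((ι → R) ⧸ LinearMap.range (B * Matrix.diagonal a).mulVecLin), s • x = 0 := by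
  intro x hx
  obtain ⟨v, rfl⟩ := Submodule.Quotient.mk_surjective _ x
  obtain ⟨⟨c, hc⟩, hcv⟩ := mem_torsion_iff _ |>.1 hx
  rw [← Quotient.mk_smul, Quotient.mk_eq_zero] at hcv ⊢
  rw [Matrix.mulVecLin_mul, LinearMap.range_comp, Matrix.range_mulVecLin_diagonal] at hcv ⊢
  obtain ⟨u, rfl⟩ := (Matrix.mulVec_surjective_iff_isUnit.2 hB) v
  obtain ⟨w, hw, hwu⟩ := hcv
  obtain rfl : w = c • u := Matrix.mulVec_injective_of_isUnit hB <| by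
    simpa [Matrix.mulVec_smul] using hwu
  refine ⟨s • u, mem_pi.2 fun j _ => ?_, by simp⟩
  have hj := mem_pi.1 hw j (Set.mem_univ j)
  rw [Pi.smul_apply, smul_eq_mul, Ideal.mem_span_singleton] at hj ⊢
  by_cases haj : a j = 0
  · simp_all [nonZeroDivisors.ne_zero hc]
  · exact (ha j haj).mul_right (u j)

theorem Matrix.map_pi_span_map_eq_of_mul_map_mul_eq_diagonal {R S : Type*} [CommRing R]
    [CommRing S] {ι : Type*} [Fintype ι] [DecidableEq ι] {φ : R →+* S}
    (hφ : Function.Surjective φ) {M B : Matrix ι ι R} {a : ι → R}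
    (hM : LinearMap.range M.mulVecLin = LinearMap.range (B * Matrix.diagonal a).mulVecLin)
    {P Q : Matrix ι ι S} (hQ : IsUnit Q) {d : ι → S}
    (hPMQ : P * M.map φ * Q = Matrix.diagonal d) :
    Submodule.map (P * B.map φ).mulVecLin (pi Set.univ fun j => Ideal.span {φ (a j)}) =
      pi Set.univ fun j => Ideal.span {d j} := by
  have hreduce : LinearMap.range (M.map φ).mulVecLin =
      Submodule.map (B.map φ).mulVecLin (pi Set.univ fun j => Ideal.span {φ (a j)}) := by
    rw [range_mulVecLin_map_eq_of_range_eq hφ hM, Matrix.map_mul, diagonal_map (map_zero φ),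
      mulVecLin_mul, LinearMap.range_comp, range_mulVecLin_diagonal]
  rw [mulVecLin_mul, map_comp, ← hreduce, ← LinearMap.range_comp, ← mulVecLin_mul,
    ← range_mulVecLin_diagonal, ← hPMQ, mulVecLin_mul _ Q, LinearMap.range_comp,
    (LinearMap.range_eq_top (f := Q.mulVecLin)).2 (mulVec_surjective_iff_isUnit.2 hQ),
    Submodule.map_top]

/-- Let `L = ℤ_p^l`, `f` the linear map given by the matrix `M`, with
kernel of rank `r`, and `A` the torsion submodule of `Coker f`.  If the mod
`p^(k+1)` reduction of `M` has Smith normal form `P · M̄ · Q = diag(d)` and the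
number of nonzero elementary divisors `d j` equals `l - r`, then the exponent of
`A` divides `p^k`. -/
theorem stmt7 (p : ℕ) [Fact p.Prime] (l k r : ℕ) (M : Matrix (Fin l) (Fin l) ℤ_[p])
    (hr : Module.finrank ℤ_[p] (LinearMap.ker M.mulVecLin) = r)
    (P Q : Matrix (Fin l) (Fin l) (ZMod (p ^ (k + 1))))
    (hP : IsUnit P) (hQ : IsUnit Q) (d : Fin l → ZMod (p ^ (k + 1)))
    (hSNF : P * M.map (PadicInt.toZModPow (k + 1)) * Q = Matrix.diagonal d)
    (hcount : (Finset.univ.filter (fun j => d j ≠ 0)).card = l - r) :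
    ∀ x ∈ Submodule.torsion ℤ_[p]
        ((Fin l → ℤ_[p]) ⧸ LinearMap.range M.mulVecLin),
      (p : ℤ_[p]) ^ k • x = 0 := by
  classical
  set π := PadicInt.toZModPow (p := p) (k + 1)
  obtain ⟨B, a, hB, hN, hrank⟩ := (LinearMap.range M.mulVecLin).exists_isUnit_eq_range_mul_diagonal
  have hnullity := M.mulVecLin.finrank_range_add_finrank_ker_of_isNoetherianRing
  rw [hr, Fintype.card_fin] at hnullity
  have hmap := Matrix.map_pi_span_map_eq_of_mul_map_mul_eq_diagonal
    (ZMod.ringHom_surjective π) hN hQ hSNF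
  have hPB : IsUnit (P * B.map π) := hP.mul (hB.map π.mapMatrix)
  have hcount' := card_filter_ne_zero_eq_of_map_pi_span_eq
    (ZMod.natCast_pow_ne_zero_of_one_lt (Fact.out : p.Prime).one_lt k)
    (fun _ hc => ZMod.dvd_prime_pow_of_ne_zero hc)
    ⟨Matrix.mulVec_injective_of_isUnit hPB, Matrix.mulVec_surjective_iff_isUnit.2 hPB⟩ hmap
  have hsub : (Finset.univ.filter fun j => π (a j) ≠ 0) ⊆ Finset.univ.filter fun j => a j ≠ 0 :=
    Finset.monotone_filter_right _ fun j _ h ha => h (by rw [ha, map_zero])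
  -- both sides have `l - r` elements
  have heq := Finset.eq_of_subset_of_card_le hsub (by omega)
  rw [hN]
  refine smul_eq_zero_of_mem_torsion_quotient_range_mul_diagonal hB fun j hj => ?_
  refine PadicInt.dvd_pow_of_toZModPow_ne_zero ?_
  have hj' : j ∈ Finset.univ.filter fun j => a j ≠ 0 := by simpa using hj
  simpa [← heq] using hj'
end

section
/- Let ω ∈ Z_5 be a primitive fourth root of unity and let x act on Z_5^4 by x(a,b,c,d) = ω^k(-a-b-c-d, a, b, c) with 1 ≤ k ≤ 3. Then x - 1 is invertible over Z_5 (its Smith normal form is the identity), so x has no nontrivial fixed points on (Z/5^n)^4 for any n. -/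
instance : Fact (Nat.Prime 5) := ⟨by norm_num⟩

/-- The order-5 element `t(a,b,c,d) = (-a-b-c-d, a, b, c)` of the reduced standard
representation of `Σ₅` over the `5`-adic integers. -/
noncomputable def tMat : Matrix (Fin 4) (Fin 4) ℤ_[5] :=
  !![-1, -1, -1, -1; 1, 0, 0, 0; 0, 1, 0, 0; 0, 0, 1, 0]

/-!
`tMat` is the companion matrix of `1 + X + X² + X³ + X⁴`, so `det (c • tMat - 1)` is that
polynomial evaluated at `c`. If `c ≠ 1` is a fourth root of unity, then `1 + c + c² + c³ = 0`
and the determinant is `c⁴ = 1`. Hence `ωᵏ • tMat - 1` is invertible over `ℤ₅`, and stays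
invertible after reduction modulo `5ⁿ`, which rules out nonzero fixed vectors there.
-/

open Finset

namespace Matrix

variable {n R S : Type*} [Fintype n] [DecidableEq n] [CommRing R] [CommRing S]

theorem eq_zero_of_mulVec_eq_self {A : Matrix n n R} (hA : IsUnit (A - 1)) {v : n → R}
    (hv : A *ᵥ v = v) : v = 0 :=
  mulVec_injective_of_isUnit hA <| by rw [sub_mulVec, hv, one_mulVec, sub_self, mulVec_zero]

theorem eq_zero_of_map_mulVec_eq_self {A : Matrix n n R} (hA : IsUnit (A - 1)) (f : R →+* S)
    {v : n → S} (hv : A.map f *ᵥ v = v) : v = 0 := by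
  refine eq_zero_of_mulVec_eq_self ?_ hv
  simpa only [RingHom.mapMatrix_apply, map_sub, map_one] using hA.map f.mapMatrix

end Matrix

theorem geom_sum_succ_eq_one_of_pow_eq_one {R : Type*} [CommRing R] [IsDomain R] {c : R}
    {n : ℕ} (hn : c ^ n = 1) (h1 : c ≠ 1) : ∑ i ∈ range (n + 1), c ^ i = 1 := by
  have hsum : ∑ i ∈ range n, c ^ i = 0 := by
    have : (∑ i ∈ range n, c ^ i) * (c - 1) = 0 := by rw [geom_sum_mul, hn, sub_self]
    exact (mul_eq_zero.mp this).resolve_right (sub_ne_zero.mpr h1)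
  rw [sum_range_succ, hsum, hn, zero_add]

theorem det_smul_tMat_sub_one (c : ℤ_[5]) :
    (c • tMat - 1).det = ∑ i ∈ range 5, c ^ i := by
  have hmat : c • tMat - 1 =
      !![-c - 1, -c, -c, -c; c, -1, 0, 0; 0, c, -1, 0; 0, 0, c, -1] := by
    ext i j
    fin_cases i <;> fin_cases j <;> simp [tMat]
  rw [hmat, Matrix.det_succ_row_zero]
  simp [Fin.sum_univ_succ, sum_range_succ, Matrix.det_fin_three, Fin.succAbove]
  ring

theorem isUnit_smul_tMat_sub_one {c : ℤ_[5]} (h4 : c ^ 4 = 1) (h1 : c ≠ 1) :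
    IsUnit (c • tMat - 1) := by
  rw [Matrix.isUnit_iff_isUnit_det, det_smul_tMat_sub_one,
    geom_sum_succ_eq_one_of_pow_eq_one h4 h1]
  exact isUnit_one

/-- Let `ω ∈ ℤ₅` be a primitive fourth root of unity and let `x` act on
`ℤ₅⁴` by `x(a,b,c,d) = ω^k(-a-b-c-d, a, b, c)` with `1 ≤ k ≤ 3`.  Then `x - 1` is
invertible over `ℤ₅` (its Smith normal form is the identity), so `x` has no
nontrivial fixed points on `(ℤ/5ⁿ)⁴` for any `n`. -/
theorem stmt15 (ω : ℤ_[5]) (hω4 : ω ^ 4 = 1) (hω2 : ω ^ 2 ≠ 1)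
    (k : ℕ) (hk1 : 1 ≤ k) (hk3 : k ≤ 3) :
    IsUnit (ω ^ k • tMat - 1) ∧
      ∀ (n : ℕ) (v : Fin 4 → ZMod (5 ^ n)),
        ((ω ^ k • tMat).map (PadicInt.toZModPow n)).mulVec v = v → v = 0 := by
  have horder : orderOf ω = 2 ^ (1 + 1) :=
    orderOf_eq_prime_pow (by simpa using hω2) (by simpa using hω4)
  have hpow4 : (ω ^ k) ^ 4 = 1 := by rw [← pow_mul, mul_comm, pow_mul, hω4, one_pow]
  have hpow1 : ω ^ k ≠ 1 := pow_ne_one_of_lt_orderOf (by omega) (by rw [horder]; omega)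
  have hunit := isUnit_smul_tMat_sub_one hpow4 hpow1
  exact ⟨hunit, fun n _ hv => Matrix.eq_zero_of_map_mulVec_eq_self hunit _ hv⟩
end
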